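/- arXiv:1007.2841 — 4 statements merged into one kernel-verified Lean document; each statement's English description precedes it below -/
import Mathlib

section
/- Let L be an odd unimodular lattice of signature (2,1). Then the isometry group O(L) acts transitively on the set {d ∈ L : ⟨d,d⟩ = -1}/±1 of (-1)-vectors modulo sign. -/
/-!
Since `⟨d, d⟩ = -1` is a unit, `L = ℤ d ⊕ d^⊥`: every `x` splits as `-⟨x, d⟩ d + (x + ⟨x, d⟩ d)`.
The complement `d^⊥` is a binary lattice of determinant `1`, positive definite because `L` has
signature `(2, 1)`, and Gauss reduction shows that such a lattice is `ℤ²` with the standard form.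
Hence for every `(-1)`-vector `d` there is an isometry `⟨-1⟩ ⊕ ⟨1⟩ ⊕ ⟨1⟩ ≅ L` sending the first
basis vector to `d`; composing the one for `d'` with the inverse of the one for `d` maps `d` to `d'`.
-/

open Matrix Module

theorem Module.exists_basis_zero_eq_of_apply_eq_one {R M : Type*} [CommRing R] [IsDomain R]
    [IsPrincipalIdealRing R] [AddCommGroup M] [Module R M] [Module.Free R M] [Module.Finite R M]
    {n : ℕ} (hM : finrank R M = n + 1) (f : M →ₗ[R] R) {d : M} (hd : f d = 1) :
    ∃ b : Basis (Fin (n + 1)) R M, b 0 = d ∧ ∀ i : Fin n, f (b i.succ) = 0 := by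
  let b := Basis.mkFinCons d (Module.finBasis R (LinearMap.ker f))
    (fun c x hx hcx => by simpa [hd, LinearMap.mem_ker.mp hx] using congr_arg f hcx)
    (fun z => ⟨-f z, by simp [hd]⟩)
  have hcard : finrank R (LinearMap.ker f) + 1 = n + 1 := by
    rw [← hM, finrank_eq_card_basis b, Fintype.card_fin]
  exact ⟨b.reindex (finCongr hcard), by simp [b], fun i => by simp [b]⟩

namespace Matrix

variable {R : Type*} [CommRing R]

section Square

variable {n : Type*} [Fintype n]

theorem transpose_mul_mul_mul (S T X : Matrix n n R) :
    (S * T)ᵀ * X * (S * T) = Tᵀ * (Sᵀ * X * S) * T := by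
  simp only [transpose_mul, Matrix.mul_assoc]

theorem transpose_mul_mul_apply (A B : Matrix n n R) (i j : n) :
    (Bᵀ * A * B) i j = Bᵀ i ⬝ᵥ A *ᵥ Bᵀ j := by
  simp only [mul_apply, dotProduct, mulVec, transpose_apply, Finset.sum_mul, Finset.mul_sum]
  rw [Finset.sum_comm]
  simp only [mul_assoc]

theorem dotProduct_transpose_mul_mul_mulVec (A P : Matrix n n R) (x y : n → R) :
    x ⬝ᵥ (Pᵀ * A * P) *ᵥ y = (P *ᵥ x) ⬝ᵥ A *ᵥ (P *ᵥ y) := by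
  rw [← mulVec_mulVec, ← mulVec_mulVec, dotProduct_mulVec, vecMul_transpose]

theorem exists_dotProduct_transpose_mul_mul_mulVec_eq [DecidableEq n] (A : Matrix n n R)
    {Q : Matrix n n R} (hQ : IsUnit Q.det) (y : n → R) :
    ∃ x, x ⬝ᵥ (Qᵀ * A * Q) *ᵥ x = y ⬝ᵥ A *ᵥ y :=
  ⟨Q⁻¹ *ᵥ y, by
    rw [dotProduct_transpose_mul_mul_mulVec, mulVec_mulVec, mul_nonsing_inv _ hQ, one_mulVec]⟩

theorem dotProduct_mulVec_comm {A : Matrix n n R} (hA : Aᵀ = A) (x y : n → R) :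
    x ⬝ᵥ A *ᵥ y = y ⬝ᵥ A *ᵥ x := by
  rw [dotProduct_mulVec, ← mulVec_transpose, hA, dotProduct_comm]

end Square

theorem shear_transpose_mul_mul (a b c t : R) :
    !![1, t; 0, 1]ᵀ * !![a, b; b, c] * !![1, t; 0, 1] =
      !![a, b + t * a; b + t * a, c + 2 * t * b + t ^ 2 * a] := by
  ext i j
  fin_cases i <;> fin_cases j <;> simp [mul_apply, Fin.sum_univ_two] <;> ring

theorem swap_transpose_mul_mul (a b c : R) :
    !![0, -1; 1, 0]ᵀ * !![a, b; b, c] * !![0, -1; 1, 0] = !![c, -b; -b, a] := by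
  ext i j
  fin_cases i <;> fin_cases j <;> simp [mul_apply, Fin.sum_univ_two]

def fromBlocks₁₂ (u : R) (Y : Matrix (Fin 2) (Fin 2) R) : Matrix (Fin 3) (Fin 3) R :=
  !![u, 0, 0; 0, Y 0 0, Y 0 1; 0, Y 1 0, Y 1 1]

theorem fromBlocks₁₂_transpose_mul_mul (u : R) (S Y : Matrix (Fin 2) (Fin 2) R) :
    (fromBlocks₁₂ 1 S)ᵀ * fromBlocks₁₂ u Y * fromBlocks₁₂ 1 S = fromBlocks₁₂ u (Sᵀ * Y * S) := by
  ext i j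
  fin_cases i <;> fin_cases j <;> simp [fromBlocks₁₂, mul_apply, Fin.sum_univ_succ]

theorem det_fromBlocks₁₂ (u : R) (Y : Matrix (Fin 2) (Fin 2) R) :
    (fromBlocks₁₂ u Y).det = u * Y.det := by
  simp [fromBlocks₁₂, det_fin_three, det_fin_two]
  ring

theorem fromBlocks₁₂_one_mulVec_single_zero (S : Matrix (Fin 2) (Fin 2) R) :
    fromBlocks₁₂ 1 S *ᵥ Pi.single 0 1 = Pi.single 0 1 := by
  ext i
  fin_cases i <;> simp [fromBlocks₁₂]

theorem fromBlocks₁₂_neg_one_one :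
    fromBlocks₁₂ (-1) (1 : Matrix (Fin 2) (Fin 2) R) = diagonal ![-1, 1, 1] := by
  ext i j
  fin_cases i <;> fin_cases j <;> simp [fromBlocks₁₂]

theorem map_fromBlocks₁₂ {S : Type*} [CommRing S] (f : R →+* S) (u a b c : R) :
    (fromBlocks₁₂ u !![a, b; b, c]).map f = fromBlocks₁₂ (f u) !![f a, f b; f b, f c] := by
  ext i j
  fin_cases i <;> fin_cases j <;> simp [fromBlocks₁₂]

theorem dotProduct_fromBlocks₁₂_mulVec (u a b c : R) (x : Fin 3 → R) :
    x ⬝ᵥ fromBlocks₁₂ u !![a, b; b, c] *ᵥ x =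
      u * x 0 ^ 2 + (a * x 1 ^ 2 + 2 * b * x 1 * x 2 + c * x 2 ^ 2) := by
  simp [fromBlocks₁₂, dotProduct, mulVec, Fin.sum_univ_three]
  ring

end Matrix

theorem exists_unimodular_congr_one_of_det_eq_one (a b c : ℤ) (ha : 0 < a)
    (hdet : a * c - b ^ 2 = 1) :
    ∃ S : Matrix (Fin 2) (Fin 2) ℤ, IsUnit S.det ∧ Sᵀ * !![a, b; b, c] * S = 1 := by
  obtain rfl | ha1 := eq_or_lt_of_le (show 1 ≤ a from ha)
  · refine ⟨!![1, -b; 0, 1], by simp [det_fin_two_of], ?_⟩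
    have hc : c + 2 * -b * b + (-b) ^ 2 * 1 = 1 := by linear_combination hdet
    rw [shear_transpose_mul_mul, hc, one_fin_two]
    simp
  · obtain ⟨q, r, hb, hr0, hra⟩ : ∃ q r, b + -q * a = r ∧ 0 ≤ r ∧ r < a :=
      ⟨b / a, b % a, by linarith [Int.mul_ediv_add_emod b a], Int.emod_nonneg _ ha.ne',
        Int.emod_lt_of_pos _ ha⟩
    obtain ⟨c', hc'⟩ : ∃ c', c + 2 * -q * b + (-q) ^ 2 * a = c' := ⟨_, rfl⟩
    have hdet' : a * c' - r ^ 2 = 1 := by rw [← hb, ← hc']; linear_combination hdet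
    -- `a c' = 1 + r² ≤ 1 + (a - 1)² < a²`, so the recursion terminates.
    have hc'a : c' < a := by nlinarith
    obtain ⟨S, hSu, hS⟩ := exists_unimodular_congr_one_of_det_eq_one c' (-r) a
      (by nlinarith) (by linear_combination hdet')
    refine ⟨!![1, -q; 0, 1] * !![0, -1; 1, 0] * S, ?_, ?_⟩
    · rw [det_mul, det_mul]
      simpa [det_fin_two_of] using hSu
    · rw [transpose_mul_mul_mul, transpose_mul_mul_mul, shear_transpose_mul_mul, hb, hc',
        swap_transpose_mul_mul, hS]
termination_by a.toNat
decreasing_by omega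

theorem binary_form_nonpos {a b c : ℝ} (ha : a ≤ 0) (habc : a * c - b ^ 2 = 1) (s t : ℝ) :
    a * s ^ 2 + 2 * b * s * t + c * t ^ 2 ≤ 0 := by
  have ha' : a < 0 := ha.lt_of_ne (by rintro rfl; nlinarith)
  have key : a * (a * s ^ 2 + 2 * b * s * t + c * t ^ 2) = (a * s + b * t) ^ 2 + t ^ 2 := by
    linear_combination t ^ 2 * habc
  exact nonpos_of_mul_nonneg_right (key ▸ by positivity) ha'

theorem exists_unimodular_congr_fromBlocks₁₂ {A : Matrix (Fin 3) (Fin 3) ℤ} (hA : Aᵀ = A)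
    {d : Fin 3 → ℤ} (hd : d ⬝ᵥ A *ᵥ d = -1) :
    ∃ (B : Matrix (Fin 3) (Fin 3) ℤ) (a b c : ℤ), IsUnit B.det ∧ B *ᵥ Pi.single 0 1 = d ∧
      Bᵀ * A * B = fromBlocks₁₂ (-1) !![a, b; b, c] := by
  obtain ⟨e, he0, he⟩ := exists_basis_zero_eq_of_apply_eq_one (n := 2) (d := d) (by simp)
    (-toLinearMap₂' ℤ A d) (by simp [toLinearMap₂'_apply', hd])
  have he1 : d ⬝ᵥ A *ᵥ e 1 = 0 := by simpa [toLinearMap₂'_apply'] using he 0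
  have he2 : d ⬝ᵥ A *ᵥ e 2 = 0 := by simpa [toLinearMap₂'_apply'] using he 1
  let B := (Pi.basisFun ℤ (Fin 3)).toMatrix e
  have hBcol : ∀ i, Bᵀ i = e i := fun i => by ext; simp [B, Basis.toMatrix_apply]
  refine ⟨B, e 1 ⬝ᵥ A *ᵥ e 1, e 1 ⬝ᵥ A *ᵥ e 2, e 2 ⬝ᵥ A *ᵥ e 2,
    by rw [← Basis.det_apply]; exact (Pi.basisFun ℤ (Fin 3)).isUnit_det e,
    by ext i; simp [B, he0, Basis.toMatrix_apply], ?_⟩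
  ext i j
  fin_cases i <;> fin_cases j <;>
    simp [fromBlocks₁₂, transpose_mul_mul_apply, hBcol, he0, hd, he1, he2,
      dotProduct_mulVec_comm hA _ d, dotProduct_mulVec_comm hA (e 2)]

theorem det_eq_neg_one_of_congr_diagonal {A : Matrix (Fin 3) (Fin 3) ℤ}
    (hunimod : A.det.natAbs = 1) {P : Matrix (Fin 3) (Fin 3) ℝ}
    (hP : Pᵀ * A.map (Int.cast : ℤ → ℝ) * P = diagonal ![1, 1, -1]) :
    A.det = -1 := by
  change Pᵀ * A.map (Int.castRingHom ℝ) * P = _ at hP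
  have hdet := congr_arg det hP
  rw [det_mul, det_mul, det_transpose, ← RingHom.mapMatrix_apply, ← RingHom.map_det,
    det_diagonal, Fin.prod_univ_three] at hdet
  have hneg : (A.det : ℝ) < 0 := by
    simp at hdet
    nlinarith [mul_self_nonneg P.det]
  have : A.det < 0 := by exact_mod_cast hneg
  omega

/-- The vector `P e₀` has norm `1`; pulled back along `B` it has norm `1` for the block form,
which is negative semidefinite when `a ≤ 0`. -/
theorem pos_of_transpose_mul_mul_eq_fromBlocks₁₂ {A : Matrix (Fin 3) (Fin 3) ℤ}
    {P : Matrix (Fin 3) (Fin 3) ℝ} (hP : Pᵀ * A.map (Int.cast : ℤ → ℝ) * P = diagonal ![1, 1, -1])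
    {B : Matrix (Fin 3) (Fin 3) ℤ} (hB : IsUnit B.det) {a b c : ℤ}
    (hC : Bᵀ * A * B = fromBlocks₁₂ (-1) !![a, b; b, c]) (habc : a * c - b ^ 2 = 1) : 0 < a := by
  change Pᵀ * A.map (Int.castRingHom ℝ) * P = _ at hP
  have hBr : IsUnit (B.map (Int.castRingHom ℝ)).det := by
    rw [← RingHom.mapMatrix_apply, ← RingHom.map_det]
    exact hB.map _
  obtain ⟨x, hx⟩ := exists_dotProduct_transpose_mul_mul_mulVec_eq (A.map (Int.castRingHom ℝ)) hBr
    (P *ᵥ Pi.single 0 1)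
  rw [← dotProduct_transpose_mul_mul_mulVec, ← transpose_map, ← Matrix.map_mul, ← Matrix.map_mul,
    hC, map_fromBlocks₁₂, hP] at hx
  simp [dotProduct_fromBlocks₁₂_mulVec] at hx
  by_contra! ha
  nlinarith [binary_form_nonpos (a := a) (b := b) (c := c) (by exact_mod_cast ha)
    (by exact_mod_cast habc) (x 1) (x 2)]

theorem exists_unimodular_congr_diagonal {A : Matrix (Fin 3) (Fin 3) ℤ} (hA : Aᵀ = A)
    (hdet : A.det = -1) {P : Matrix (Fin 3) (Fin 3) ℝ}
    (hP : Pᵀ * A.map (Int.cast : ℤ → ℝ) * P = diagonal ![1, 1, -1])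
    {d : Fin 3 → ℤ} (hd : d ⬝ᵥ A *ᵥ d = -1) :
    ∃ M : Matrix (Fin 3) (Fin 3) ℤ, IsUnit M.det ∧ Mᵀ * A * M = diagonal ![-1, 1, 1] ∧
      M *ᵥ Pi.single 0 1 = d := by
  obtain ⟨B, a, b, c, hB, hBd, hBA⟩ := exists_unimodular_congr_fromBlocks₁₂ hA hd
  have habc : a * c - b ^ 2 = 1 := by
    have h := congr_arg det hBA
    rw [det_mul, det_mul, det_transpose, hdet, det_fromBlocks₁₂, det_fin_two_of] at h
    linear_combination h + Int.isUnit_mul_self hB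
  obtain ⟨S, hS, hSA⟩ := exists_unimodular_congr_one_of_det_eq_one a b c
    (pos_of_transpose_mul_mul_eq_fromBlocks₁₂ hP hB hBA habc) habc
  refine ⟨B * fromBlocks₁₂ 1 S, ?_, ?_, ?_⟩
  · rw [det_mul, det_fromBlocks₁₂, one_mul]
    exact hB.mul hS
  · rw [transpose_mul_mul_mul, hBA, fromBlocks₁₂_transpose_mul_mul, hSA, fromBlocks₁₂_neg_one_one]
  · rw [← mulVec_mulVec, fromBlocks₁₂_one_mulVec_single_zero, hBd]

theorem stmt2_general (A : Matrix (Fin 3) (Fin 3) ℤ)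
    (hsymm : Aᵀ = A)
    (hunimod : A.det.natAbs = 1)
    (hsig : ∃ P : Matrix (Fin 3) (Fin 3) ℝ, IsUnit P.det ∧
      Pᵀ * A.map (Int.cast : ℤ → ℝ) * P = Matrix.diagonal ![1, 1, -1])
    (d d' : Fin 3 → ℤ)
    (hd : d ⬝ᵥ A.mulVec d = -1) (hd' : d' ⬝ᵥ A.mulVec d' = -1) :
    ∃ g : Matrix (Fin 3) (Fin 3) ℤ, IsUnit g.det ∧ gᵀ * A * g = A ∧
      (g.mulVec d = d' ∨ g.mulVec d = -d') := by
  obtain ⟨P, -, hP⟩ := hsig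
  have hdet := det_eq_neg_one_of_congr_diagonal hunimod hP
  obtain ⟨M, hM, hMA, hMd⟩ := exists_unimodular_congr_diagonal hsymm hdet hP hd
  obtain ⟨M', hM', hM'A, hM'd⟩ := exists_unimodular_congr_diagonal hsymm hdet hP hd'
  refine ⟨M' * M⁻¹, ?_, ?_, Or.inl ?_⟩
  · rw [det_mul]
    exact hM'.mul (isUnit_nonsing_inv_det M hM)
  · rw [transpose_mul_mul_mul, hM'A, ← hMA, ← transpose_mul_mul_mul, mul_nonsing_inv _ hM]
    simp
  · rw [← hMd, mulVec_mulVec, Matrix.mul_assoc, nonsing_inv_mul _ hM, Matrix.mul_one, hM'd]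

/-- Let `L` be an odd unimodular lattice of signature (2,1) (realized as
`ℤ³` with Gram matrix `A`). Then the isometry group `O(L)` acts transitively on the
set of `(-1)`-vectors modulo `±1`. -/
theorem stmt2 (A : Matrix (Fin 3) (Fin 3) ℤ)
    (hsymm : Aᵀ = A)
    (hodd : ∃ x : Fin 3 → ℤ, Odd (x ⬝ᵥ A.mulVec x))
    (hunimod : A.det.natAbs = 1)
    (hsig : ∃ P : Matrix (Fin 3) (Fin 3) ℝ, IsUnit P.det ∧
      Pᵀ * A.map (Int.cast : ℤ → ℝ) * P = Matrix.diagonal ![1, 1, -1])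
    (d d' : Fin 3 → ℤ)
    (hd : d ⬝ᵥ A.mulVec d = -1) (hd' : d' ⬝ᵥ A.mulVec d' = -1) :
    ∃ g : Matrix (Fin 3) (Fin 3) ℤ, IsUnit g.det ∧ gᵀ * A * g = A ∧
      (g.mulVec d = d' ∨ g.mulVec d = -d') :=
  stmt2_general A hsymm hunimod hsig d d' hd hd'
end

section
/- Let M^⊥ = ⟨2⟩ ⊕ ⟨2⟩ ⊕ ⟨-2⟩, i.e., Z³ with the diagonal bilinear form diag(2,2,-2). Then O(M^⊥) acts transitively on the set Δ/±1, where Δ = {d ∈ M^⊥ : ⟨d,d⟩ = -2} is the set of roots modulo sign. -/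
/-!
A root `(a, b, c)` is a solution of `a² + b² + 1 = c²`. Coordinate sign changes are isometries, and
so is the reflection in the vector `(1, 1, 1)` of norm `2`, which sends `c` to `-2a - 2b + 3c`.
For `a, b, c ≥ 0` with `ab ≠ 0` one has `c < a + b < 2c`, so the reflection strictly decreases
`|c|`; if `ab = 0`, the root is `(0, 0, 1)`, because `x² + 1` is not a square for `x ≠ 0`.
By descent on `|c|` every root lies in the orbit of `(0, 0, 1)`.
-/

open Matrix

section Isometry

variable {n R : Type*} [Fintype n] [DecidableEq n] [CommRing R]

def IsIsometry (J g : Matrix n n R) : Prop := IsUnit g.det ∧ gᵀ * J * g = J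

namespace IsIsometry

variable {J g h : Matrix n n R}

theorem one : IsIsometry J 1 := ⟨by simp, by simp⟩

theorem mul (hg : IsIsometry J g) (hh : IsIsometry J h) : IsIsometry J (g * h) := by
  refine ⟨by rw [det_mul]; exact hg.1.mul hh.1, ?_⟩
  calc (g * h)ᵀ * J * (g * h) = hᵀ * (gᵀ * J * g) * h := by
        simp only [transpose_mul, Matrix.mul_assoc]
    _ = J := by rw [hg.2, hh.2]

theorem nonsing_inv (hg : IsIsometry J g) : IsIsometry J g⁻¹ := by
  refine ⟨isUnit_nonsing_inv_det g hg.1, ?_⟩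
  calc g⁻¹ᵀ * J * g⁻¹ = (g * g⁻¹)ᵀ * J * (g * g⁻¹) := by
        conv_lhs => rw [← hg.2]
        simp only [transpose_mul, Matrix.mul_assoc]
    _ = J := by rw [mul_nonsing_inv g hg.1, transpose_one, Matrix.one_mul, Matrix.mul_one]

theorem mulVec_dotProduct_mulVec (hg : IsIsometry J g) (v : n → R) :
    g *ᵥ v ⬝ᵥ J *ᵥ (g *ᵥ v) = v ⬝ᵥ J *ᵥ v := by
  conv_rhs => rw [← hg.2]
  rw [dotProduct_mulVec, dotProduct_mulVec, ← vecMul_transpose, vecMul_vecMul, vecMul_vecMul,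
    ← dotProduct_mulVec, Matrix.mul_assoc]

end IsIsometry

theorem isIsometry_diagonal {w e : n → R} (he : ∀ i, e i * e i = 1) :
    IsIsometry (diagonal w) (diagonal e) := by
  refine ⟨isUnit_det_of_left_inverse (B := diagonal e) ?_, ?_⟩
  · rw [diagonal_mul_diagonal, ← diagonal_one]
    exact congrArg diagonal (funext he)
  · rw [diagonal_transpose, diagonal_mul_diagonal, diagonal_mul_diagonal]
    congr 1
    funext i
    linear_combination w i * he i

/-- `x ↦ x - ⟨x, v⟩ v` for `⟨x, y⟩ = xᵀ J y`: the reflection in `v` when `J` is symmetric and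
`⟨v, v⟩ = 2`. -/
def reflection (J : Matrix n n R) (v : n → R) : Matrix n n R := 1 - vecMulVec v (J *ᵥ v)

variable {J : Matrix n n R} {v : n → R}

theorem reflection_mul_self (hv : v ⬝ᵥ J *ᵥ v = 2) : reflection J v * reflection J v = 1 := by
  rw [reflection, sub_mul, mul_sub, mul_sub, vecMulVec_mul_vecMulVec, dotProduct_comm, hv,
    vecMulVec_smul]
  simp only [Matrix.one_mul, Matrix.mul_one]
  module

theorem isIsometry_reflection (hJ : Jᵀ = J) (hv : v ⬝ᵥ J *ᵥ v = 2) :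
    IsIsometry J (reflection J v) := by
  refine ⟨isUnit_det_of_left_inverse (reflection_mul_self hv), ?_⟩
  rw [reflection, transpose_sub, transpose_one, transpose_vecMulVec, sub_mul, sub_mul, mul_sub,
    mul_sub, vecMulVec_mul, vecMulVec_mul_vecMulVec, ← mulVec_transpose, hJ, mul_vecMulVec,
    dotProduct_comm, hv, vecMulVec_smul]
  simp only [Matrix.one_mul, Matrix.mul_one]
  module

end Isometry

theorem diagonal_sign_mulVec {n R : Type*} [Fintype n] [DecidableEq n] [CommRing R] [LinearOrder R]
    [IsStrictOrderedRing R] (v : n → R) :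
    (diagonal fun i => if v i < 0 then -1 else 1) *ᵥ v = fun i => |v i| := by
  funext i
  rw [mulVec_diagonal]
  split_ifs with h
  · rw [abs_of_neg h, neg_one_mul]
  · rw [abs_of_nonneg (not_lt.mp h), one_mul]

theorem Int.eq_zero_of_sq_add_one_eq_sq {x y : ℤ} (h : x ^ 2 + 1 = y ^ 2) : x = 0 := by
  by_contra hx
  have hxy : |x| < |y| := sq_lt_sq.mp (by linarith)
  have hx0 : 0 < |x| := abs_pos.mpr hx
  nlinarith [sq_abs x, sq_abs y]

local notation "J₃" => (diagonal ![2, 2, -2] : Matrix (Fin 3) (Fin 3) ℤ)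

theorem dotProduct_J₃_mulVec (v : Fin 3 → ℤ) :
    v ⬝ᵥ J₃ *ᵥ v = 2 * (v 0 ^ 2 + v 1 ^ 2 - v 2 ^ 2) := by
  simp only [dotProduct, mulVec_diagonal, Fin.sum_univ_three, Fin.isValue, cons_val_zero,
    cons_val_one, cons_val, neg_mul, mul_neg]
  ring

theorem reflection_J₃_mulVec_two (w : Fin 3 → ℤ) :
    (reflection J₃ ![1, 1, 1] *ᵥ w) 2 = w 2 - (2 * w 0 + 2 * w 1 - 2 * w 2) := by
  rw [reflection, sub_mulVec, one_mulVec, vecMulVec_mulVec]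
  simp [dotProduct, Fin.sum_univ_three, mulVec_diagonal, sub_eq_add_neg]

theorem isIsometry_reflection_J₃ : IsIsometry J₃ (reflection J₃ ![1, 1, 1]) :=
  isIsometry_reflection (diagonal_transpose _) (by rw [dotProduct_J₃_mulVec]; rfl)

theorem eq_of_nonneg_of_mul_eq_zero {w : Fin 3 → ℤ} (hw : ∀ i, 0 ≤ w i) (h : w 0 * w 1 = 0)
    (hroot : w ⬝ᵥ J₃ *ᵥ w = -2) : w = ![0, 0, 1] := by
  rw [dotProduct_J₃_mulVec] at hroot
  have h0 : w 0 = 0 := by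
    rcases mul_eq_zero.mp h with h0 | h1
    · exact h0
    · exact Int.eq_zero_of_sq_add_one_eq_sq (y := w 2) (by rw [h1] at hroot; linarith)
  have h1 : w 1 = 0 := Int.eq_zero_of_sq_add_one_eq_sq (y := w 2) (by rw [h0] at hroot; linarith)
  have h2 : w 2 = 1 := by
    rw [h0, h1] at hroot
    nlinarith [hw 2]
  ext i; fin_cases i <;> simp [h0, h1, h2]

theorem abs_reflection_J₃_mulVec_two_lt {w : Fin 3 → ℤ} (hw : ∀ i, 0 ≤ w i) (h : w 0 * w 1 ≠ 0)
    (hroot : w ⬝ᵥ J₃ *ᵥ w = -2) : |(reflection J₃ ![1, 1, 1] *ᵥ w) 2| < w 2 := by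
  rw [dotProduct_J₃_mulVec] at hroot
  have hab : 0 < w 0 * w 1 := lt_of_le_of_ne (mul_nonneg (hw 0) (hw 1)) (Ne.symm h)
  rw [reflection_J₃_mulVec_two, abs_lt]
  constructor <;> nlinarith [hw 0, hw 1, hw 2, sq_nonneg (w 0 - w 1)]

theorem exists_isIsometry_J₃_mulVec_eq (v : Fin 3 → ℤ) (hv : v ⬝ᵥ J₃ *ᵥ v = -2) :
    ∃ g, IsIsometry J₃ g ∧ g *ᵥ v = ![0, 0, 1] := by
  induction hn : (v 2).natAbs using Nat.strong_induction_on generalizing v with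
  | _ n ih =>
  set ε : Matrix (Fin 3) (Fin 3) ℤ := diagonal fun i => if v i < 0 then -1 else 1
  have hε : IsIsometry J₃ ε := isIsometry_diagonal fun i => by split_ifs <;> norm_num
  set w := ε *ᵥ v
  have hw : w = fun i => |v i| := diagonal_sign_mulVec v
  have hwroot : w ⬝ᵥ J₃ *ᵥ w = -2 := (hε.mulVec_dotProduct_mulVec v).trans hv
  suffices ∃ g, IsIsometry J₃ g ∧ g *ᵥ w = ![0, 0, 1] by
    obtain ⟨g, hg, hgw⟩ := this
    exact ⟨g * ε, hg.mul hε, by rw [← mulVec_mulVec, hgw]⟩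
  have hw_nonneg : ∀ i, 0 ≤ w i := by simp [hw]
  by_cases h01 : w 0 * w 1 = 0
  · exact ⟨1, .one, by rw [one_mulVec, eq_of_nonneg_of_mul_eq_zero hw_nonneg h01 hwroot]⟩
  set r := reflection J₃ ![1, 1, 1]
  have hlt : ((r *ᵥ w) 2).natAbs < n := by
    zify
    rw [← hn, Int.natCast_natAbs, ← congrFun hw 2]
    exact abs_reflection_J₃_mulVec_two_lt hw_nonneg h01 hwroot
  obtain ⟨g, hg, hgr⟩ := ih _ hlt (r *ᵥ w)
    ((isIsometry_reflection_J₃.mulVec_dotProduct_mulVec w).trans hwroot) rfl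
  exact ⟨g * r, hg.mul isIsometry_reflection_J₃, by rw [← mulVec_mulVec, hgr]⟩

/-- Let `M^⊥ = ⟨2⟩ ⊕ ⟨2⟩ ⊕ ⟨-2⟩`, i.e. `ℤ³` with the bilinear form
`diag(2,2,-2)`. Then `O(M^⊥)` acts transitively on the set of roots
`Δ = {d : ⟨d,d⟩ = -2}` modulo `±1`. -/
theorem stmt3 (d d' : Fin 3 → ℤ)
    (hd : d ⬝ᵥ (Matrix.diagonal ![2, 2, -2] : Matrix (Fin 3) (Fin 3) ℤ).mulVec d = -2)
    (hd' : d' ⬝ᵥ (Matrix.diagonal ![2, 2, -2] : Matrix (Fin 3) (Fin 3) ℤ).mulVec d' = -2) :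
    ∃ g : Matrix (Fin 3) (Fin 3) ℤ, IsUnit g.det ∧
      gᵀ * (Matrix.diagonal ![2, 2, -2]) * g = Matrix.diagonal ![2, 2, -2] ∧
      (g.mulVec d = d' ∨ g.mulVec d = -d') := by
  obtain ⟨g, hg, hgd⟩ := exists_isIsometry_J₃_mulVec_eq d hd
  obtain ⟨g', hg', hgd'⟩ := exists_isIsometry_J₃_mulVec_eq d' hd'
  have hiso := hg'.nonsing_inv.mul hg
  refine ⟨g'⁻¹ * g, hiso.1, hiso.2, Or.inl ?_⟩
  rw [← mulVec_mulVec, hgd, ← hgd', mulVec_mulVec, nonsing_inv_mul g' hg'.1, one_mulVec]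
end

section
/- The map c : Δ → P²(C) defined by c(z) = ((1+z²)/2 : (1-z²)/(2i) : z) is a biholomorphism from the open unit disc Δ = {z ∈ C : |z| < 1} onto the domain Ω⁺ = {(x:y:z) ∈ P²(C) : x² + y² - z² = 0, |x|² + |y|² - |z|² > 0, |x+iy| > |x-iy|}. -/
/-!
In the coordinates `u = x + iy`, `v = x - iy` the conic `x² + y² = z²` becomes `uv = z²`, and
`c(t)` is the point `u = 1`, `v = t²`, `z = t`. So a point of the conic with `u ≠ 0` equals
`u • c(z/u)`, and `|v| < |u|` says `|z/u|² = |v/u| < 1`. Since `|x|² + |y|² = (|u|² + |v|²)/2`,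
at `c(t)` one gets `|x|² + |y|² - |z|² = (1 - |t|²)²/2 > 0`.
-/

open Complex

lemma add_I_mul_mul_sub_I_mul (x y : ℂ) : (x + I * y) * (x - I * y) = x ^ 2 + y ^ 2 := by
  linear_combination (-y ^ 2) * I_sq

lemma sq_norm_add_sq_norm_eq (x y : ℂ) :
    ‖x‖ ^ 2 + ‖y‖ ^ 2 = (‖x + I * y‖ ^ 2 + ‖x - I * y‖ ^ 2) / 2 := by
  have h := parallelogram_law_with_norm ℝ x (I * y)
  rw [norm_mul, norm_I, one_mul] at h
  linarith

noncomputable def conicParam (z : ℂ) : Fin 3 → ℂ :=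
  ![(1 + z ^ 2) / 2, (1 - z ^ 2) / (2 * I), z]

lemma conicParam_add (z : ℂ) : conicParam z 0 + I * conicParam z 1 = 1 := by
  simp only [conicParam, Matrix.cons_val_zero, Matrix.cons_val_one]
  field_simp
  ring

lemma conicParam_sub (z : ℂ) : conicParam z 0 - I * conicParam z 1 = z ^ 2 := by
  simp only [conicParam, Matrix.cons_val_zero, Matrix.cons_val_one]
  field_simp
  ring

lemma conicParam_two (z : ℂ) : conicParam z 2 = z := rfl

lemma differentiable_conicParam : Differentiable ℂ conicParam := by
  rw [differentiable_pi]
  intro i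
  fin_cases i
  · exact ((differentiable_const _).add (differentiable_pow 2)).div_const _
  · exact ((differentiable_const _).sub (differentiable_pow 2)).div_const _
  · exact differentiable_id

lemma conicParam_ne_zero (z : ℂ) : conicParam z ≠ 0 := by
  intro h
  simpa [h] using conicParam_add z

lemma conicParam_quadric (z : ℂ) :
    conicParam z 0 ^ 2 + conicParam z 1 ^ 2 - conicParam z 2 ^ 2 = 0 := by
  rw [← add_I_mul_mul_sub_I_mul, conicParam_add, conicParam_sub, conicParam_two]
  ring

lemma sq_norm_conicParam (z : ℂ) :
    ‖conicParam z 0‖ ^ 2 + ‖conicParam z 1‖ ^ 2 - ‖conicParam z 2‖ ^ 2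
      = (1 - ‖z‖ ^ 2) ^ 2 / 2 := by
  rw [sq_norm_add_sq_norm_eq, conicParam_add, conicParam_sub, conicParam_two, norm_one,
    norm_pow]
  ring

lemma eq_of_conicParam_eq_smul {z w lam : ℂ} (h : conicParam z = lam • conicParam w) :
    z = w := by
  have hlam : (1 : ℂ) = lam :=
    calc 1 = conicParam z 0 + I * conicParam z 1 := (conicParam_add z).symm
      _ = lam * (conicParam w 0 + I * conicParam w 1) := by
        rw [h, Pi.smul_apply, Pi.smul_apply, smul_eq_mul, smul_eq_mul]
        ring
      _ = lam := by rw [conicParam_add, mul_one]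
  simpa [← hlam, conicParam_two] using congrFun h 2

lemma norm_div_lt_one_of_sq_eq_mul {a b w : ℂ} (hw : w ^ 2 = a * b) (hab : ‖b‖ < ‖a‖) :
    ‖w / a‖ < 1 := by
  have ha : 0 < ‖a‖ := (norm_nonneg b).trans_lt hab
  have hw' : ‖w‖ ^ 2 < ‖a‖ ^ 2 := by
    rw [← norm_pow, hw, norm_mul, sq]
    exact mul_lt_mul_of_pos_left hab ha
  rw [norm_div, div_lt_one ha]
  exact lt_of_pow_lt_pow_left₀ 2 ha.le hw'

lemma smul_conicParam_div {a b w : ℂ} (ha : a ≠ 0) (hw : w ^ 2 = a * b) :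
    a • conicParam (w / a) = ![(a + b) / 2, (a - b) / (2 * I), w] := by
  have hz : (w / a) ^ 2 = b / a := by
    rw [div_pow, hw]
    field_simp
  funext i
  fin_cases i
  · show a * ((1 + (w / a) ^ 2) / 2) = (a + b) / 2
    rw [hz]
    field_simp
  · show a * ((1 - (w / a) ^ 2) / (2 * I)) = (a - b) / (2 * I)
    rw [hz]
    field_simp
  · exact mul_div_cancel₀ _ ha

lemma eq_smul_conicParam {v : Fin 3 → ℂ} (hw : v 2 ^ 2 = (v 0 + I * v 1) * (v 0 - I * v 1))
    (ha : v 0 + I * v 1 ≠ 0) : v = (v 0 + I * v 1) • conicParam (v 2 / (v 0 + I * v 1)) := by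
  rw [smul_conicParam_div ha hw]
  funext i
  fin_cases i
  · show v 0 = (v 0 + I * v 1 + (v 0 - I * v 1)) / 2
    ring
  · show v 1 = (v 0 + I * v 1 - (v 0 - I * v 1)) / (2 * I)
    field_simp
    ring
  · rfl

/-- The map `c(z) = ((1+z²)/2 : (1-z²)/(2i) : z)` is a biholomorphism from
the unit disc onto `Ω⁺ = {(x:y:z) ∈ P²(ℂ) : x²+y²-z²=0, |x|²+|y|²-|z|²>0, |x+iy|>|x-iy|}`.
Points of `P²(ℂ)` are represented by nonzero vectors `w : Fin 3 → ℂ` up to scaling; the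
defining conditions of `Ω⁺` are scale invariant. The claim comprises: holomorphy of the
lift, that `c` lands in `Ω⁺`, injectivity and surjectivity up to scalars, and that the
inverse is the (holomorphic, since `w 0 + i·w 1 ≠ 0` on `Ω⁺`) map `w ↦ w 2/(w 0 + i·w 1)`. -/
theorem stmt4 :
    ∃ c : ℂ → (Fin 3 → ℂ),
      (∀ z : ℂ, c z = ![(1 + z ^ 2) / 2, (1 - z ^ 2) / (2 * I), z]) ∧
      -- the lift is holomorphic
      Differentiable ℂ c ∧
      -- c maps the disc into Ω⁺
      (∀ z : ℂ, ‖z‖ < 1 →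
        (c z ≠ 0 ∧ (c z 0) ^ 2 + (c z 1) ^ 2 - (c z 2) ^ 2 = 0 ∧
          (‖c z 0‖) ^ 2 + (‖c z 1‖) ^ 2
            - (‖c z 2‖) ^ 2 > 0 ∧
          ‖c z 0 + I * c z 1‖ > ‖c z 0 - I * c z 1‖)) ∧
      -- injectivity on the disc as a map to P²(ℂ)
      (∀ z w : ℂ, ‖z‖ < 1 → ‖w‖ < 1 →
        (∃ lam : ℂ, lam ≠ 0 ∧ c z = lam • c w) → z = w) ∧
      -- surjectivity onto Ω⁺
      (∀ v : Fin 3 → ℂ, v ≠ 0 →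
        v 0 ^ 2 + v 1 ^ 2 - v 2 ^ 2 = 0 →
        (‖v 0‖) ^ 2 + (‖v 1‖) ^ 2
          - (‖v 2‖) ^ 2 > 0 →
        ‖v 0 + I * v 1‖ > ‖v 0 - I * v 1‖ →
        ∃ z : ℂ, ‖z‖ < 1 ∧ ∃ lam : ℂ, lam ≠ 0 ∧ v = lam • c z) ∧
      -- the inverse is given by the holomorphic expression w ↦ w 2 / (w 0 + i w 1),
      -- which is well defined on Ω⁺ ...
      (∀ v : Fin 3 → ℂ, v ≠ 0 →
        v 0 ^ 2 + v 1 ^ 2 - v 2 ^ 2 = 0 →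
        (‖v 0‖) ^ 2 + (‖v 1‖) ^ 2
          - (‖v 2‖) ^ 2 > 0 →
        ‖v 0 + I * v 1‖ > ‖v 0 - I * v 1‖ →
        v 0 + I * v 1 ≠ 0) ∧
      -- ... and inverts c on the disc
      (∀ z : ℂ, ‖z‖ < 1 → (c z 2) / (c z 0 + I * c z 1) = z) := by
  refine ⟨conicParam, fun _ => rfl, differentiable_conicParam, ?_, ?_, ?_, ?_, ?_⟩
  · intro z hz
    have hz2 : ‖z‖ ^ 2 < 1 := pow_lt_one₀ (norm_nonneg z) hz two_ne_zero
    refine ⟨conicParam_ne_zero z, conicParam_quadric z, ?_, ?_⟩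
    · rw [sq_norm_conicParam]
      exact div_pos (pow_pos (sub_pos.2 hz2) 2) two_pos
    · rwa [conicParam_add, conicParam_sub, norm_one, norm_pow]
  · rintro z w - - ⟨lam, -, h⟩
    exact eq_of_conicParam_eq_smul h
  · rintro v - hv - hab
    have hw : v 2 ^ 2 = (v 0 + I * v 1) * (v 0 - I * v 1) := by
      rw [add_I_mul_mul_sub_I_mul]
      linear_combination -hv
    have ha : v 0 + I * v 1 ≠ 0 := norm_pos_iff.1 ((norm_nonneg _).trans_lt hab)
    exact ⟨_, norm_div_lt_one_of_sq_eq_mul hw hab, _, ha, eq_smul_conicParam hw ha⟩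
  · rintro v - - - hab
    exact norm_pos_iff.1 ((norm_nonneg _).trans_lt hab)
  · rintro z -
    rw [conicParam_add, div_one, conicParam_two]
end

section
/- Let D be a divisor with rational coefficients on a simply connected complex manifold Ω, and suppose φ : Ω \ supp(D) → R_{>0} is smooth with -dd^c log φ = δ_D as currents. If m ∈ Z_{>0} is such that mD is an integral divisor, then G([η]) := exp(m ∫_{[η₀]}^{[η]} ∂ log φ) is a well-defined meromorphic function on Ω with div(G) = mD, and |G|² = φ^m / φ([η₀])^m. -/
open Filter

/-!
In dimension one the current equation says that `log φ = ∑ 2 a_p log |z - p| + Re H`, so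
with `k_p = m a_p ∈ ℤ` the meromorphic function `∏ (z - p)^{k_p} · exp (m H / 2)` has modulus
`φ^{m/2}`: it is the exponential of `m ∫ ∂ log φ`. Dividing by its value at `η₀` normalizes it,
and its divisor is `∑ k_p · p = m D` because the exponential factor is a holomorphic unit.
-/

section DivisorProd

variable (s : Finset ℂ) (k : ℂ → ℤ)

noncomputable def divisorProd (z : ℂ) : ℂ := ∏ q ∈ s, (z - q) ^ k q

variable {s} {z : ℂ}

lemma divisorProd_ne_zero (hz : z ∉ s) : divisorProd s k z ≠ 0 :=
  Finset.prod_ne_zero_iff.mpr fun _ hq =>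
    zpow_ne_zero _ (sub_ne_zero.mpr (ne_of_mem_of_not_mem hq hz).symm)

lemma analyticAt_divisorProd (hz : z ∉ s) : AnalyticAt ℂ (divisorProd s k) z :=
  Finset.analyticAt_fun_prod s fun _ hq =>
    (analyticAt_id.sub analyticAt_const).fun_zpow
      (sub_ne_zero.mpr (ne_of_mem_of_not_mem hq hz).symm)

lemma norm_divisorProd (hz : z ∉ s) :
    ‖divisorProd s k z‖ = Real.exp (∑ q ∈ s, k q * Real.log ‖z - q‖) := by
  rw [divisorProd, norm_prod, Real.exp_sum]
  refine Finset.prod_congr rfl fun q hq => ?_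
  have hpos : 0 < ‖z - q‖ := norm_pos_iff.mpr (sub_ne_zero.mpr (ne_of_mem_of_not_mem hq hz).symm)
  rw [norm_zpow, ← Real.rpow_intCast, Real.rpow_def_of_pos hpos, mul_comm]

lemma exists_divisorProd_mul_eq_zpow_mul {p : ℂ} (hp : p ∈ s) {g : ℂ → ℂ}
    (hg : AnalyticAt ℂ g p) (hgp : g p ≠ 0) :
    ∃ u : ℂ → ℂ, AnalyticAt ℂ u p ∧ u p ≠ 0 ∧
      ∀ z, divisorProd s k z * g z = (z - p) ^ k p * u z := by
  classical
  have hp' : p ∉ s.erase p := Finset.notMem_erase p s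
  refine ⟨fun z => divisorProd (s.erase p) k z * g z,
    (analyticAt_divisorProd k hp').mul hg, mul_ne_zero (divisorProd_ne_zero k hp') hgp,
    fun z => ?_⟩
  simp only [divisorProd]
  rw [← Finset.mul_prod_erase s (fun q => (z - q) ^ k q) hp, mul_assoc]

lemma norm_divisorProd_mul_exp_sq {a : ℂ → ℝ} {m : ℕ} {φ : ℝ} {h : ℂ} (hz : z ∉ s)
    (hφ : 0 < φ) (hk : ∀ q ∈ s, (k q : ℝ) = m * a q)
    (hlog : Real.log φ = (∑ q ∈ s, 2 * a q * Real.log ‖z - q‖) + h.re) :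
    ‖divisorProd s k z * Complex.exp (m / 2 * h)‖ ^ 2 = φ ^ m := by
  have hre : (m / 2 * h : ℂ).re = m / 2 * h.re := by simp [Complex.mul_re]
  have hsum : ∑ q ∈ s, (k q : ℝ) * Real.log ‖z - q‖
      = m / 2 * ∑ q ∈ s, 2 * a q * Real.log ‖z - q‖ := by
    rw [Finset.mul_sum]
    exact Finset.sum_congr rfl fun q hq => by rw [hk q hq]; ring
  calc ‖divisorProd s k z * Complex.exp (m / 2 * h)‖ ^ 2
      = Real.exp (m / 2 * Real.log φ) ^ 2 := by
        rw [norm_mul, norm_divisorProd k hz, Complex.norm_exp, ← Real.exp_add, hre, hsum, hlog,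
          mul_add]
    _ = φ ^ m := by
        rw [← Real.exp_nat_mul, ← mul_assoc, Nat.cast_ofNat,
          mul_div_cancel₀ _ two_ne_zero, Real.exp_nat_mul, Real.exp_log hφ]

end DivisorProd

theorem stmt16_general (Ω : Set ℂ) (hΩ : IsOpen Ω)
    (s : Finset ℂ) (hs : (s : Set ℂ) ⊆ Ω) (a : ℂ → ℚ)
    (φ : ℂ → ℝ) (hφpos : ∀ z ∈ Ω \ (s : Set ℂ), 0 < φ z)
    (H : ℂ → ℂ) (hH : DifferentiableOn ℂ H Ω)
    (hcurrent : ∀ z ∈ Ω \ (s : Set ℂ),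
      Real.log (φ z)
        = (∑ p ∈ s, 2 * (a p : ℝ) * Real.log ‖z - p‖) + (H z).re)
    (m : ℕ)
    (hint : ∀ p ∈ s, ∃ k : ℤ, (m : ℚ) * a p = (k : ℚ))
    (η₀ : ℂ) (hη₀ : η₀ ∈ Ω \ (s : Set ℂ)) :
    ∃ G : ℂ → ℂ,
      DifferentiableOn ℂ G (Ω \ (s : Set ℂ)) ∧
      (∀ z ∈ Ω \ (s : Set ℂ), G z ≠ 0) ∧
      G η₀ = 1 ∧
      (∀ z ∈ Ω \ (s : Set ℂ), ‖G z‖ ^ 2 = φ z ^ m * (φ η₀ ^ m)⁻¹) ∧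
      (∀ p ∈ s, ∃ k : ℤ, (m : ℚ) * a p = (k : ℚ) ∧
        ∃ u : ℂ → ℂ, AnalyticAt ℂ u p ∧ u p ≠ 0 ∧
          ∀ᶠ z in nhdsWithin p {p}ᶜ, G z = (z - p) ^ k * u z) := by
  choose! k hk using hint
  have hkℝ : ∀ q ∈ s, (k q : ℝ) = m * (a q : ℝ) := fun q hq => by exact_mod_cast (hk q hq).symm
  set E : ℂ → ℂ := fun z => Complex.exp (m / 2 * H z)
  have hE : ∀ z ∈ Ω, AnalyticAt ℂ E z := fun z hz =>
    (analyticAt_const.mul (hH.analyticAt (hΩ.mem_nhds hz))).cexp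
  have hη₀ne : divisorProd s k η₀ * E η₀ ≠ 0 :=
    mul_ne_zero (divisorProd_ne_zero k hη₀.2) (Complex.exp_ne_zero _)
  set C := (divisorProd s k η₀ * E η₀)⁻¹
  have hC : C ≠ 0 := inv_ne_zero hη₀ne
  have hnorm : ∀ z ∈ Ω \ (s : Set ℂ), ‖divisorProd s k z * E z‖ ^ 2 = φ z ^ m := fun z hz =>
    norm_divisorProd_mul_exp_sq k hz.2 (hφpos z hz) hkℝ (hcurrent z hz)
  refine ⟨fun z => divisorProd s k z * (E z * C), fun z hz => ?_, fun z hz => ?_,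
    ?_, fun z hz => ?_, fun p hp => ?_⟩
  · exact ((analyticAt_divisorProd k hz.2).mul ((hE z hz.1).mul analyticAt_const))
      |>.differentiableAt.differentiableWithinAt
  · exact mul_ne_zero (divisorProd_ne_zero k hz.2) (mul_ne_zero (Complex.exp_ne_zero _) hC)
  · exact (mul_assoc _ _ _).symm.trans (mul_inv_cancel₀ hη₀ne)
  · dsimp only
    rw [← mul_assoc, norm_mul, mul_pow, hnorm z hz, norm_inv, inv_pow, hnorm η₀ hη₀]
  · obtain ⟨u, hu, hup, hGu⟩ := exists_divisorProd_mul_eq_zpow_mul k hp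
      ((hE p (hs hp)).mul analyticAt_const) (mul_ne_zero (Complex.exp_ne_zero _) hC)
    exact ⟨k p, hk p hp, u, hu, hup, Eventually.of_forall hGu⟩

/-- Let `D = ∑_{p ∈ s} a_p · p` be a divisor with rational coefficients on
a simply connected domain `Ω` (here `Ω ⊆ ℂ` open, connected, simply connected), and let
`φ` be smooth positive on `Ω \ supp D` with `-dd^c log φ = δ_D` as currents.  In
dimension one this current equation means precisely that
`log φ(z) = ∑_p 2 a_p log|z-p| + (harmonic)`, and on simply connected `Ω` the harmonic
function is `Re H` for a holomorphic `H` (hypothesis `hcurrent`).  If `m·D` is an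
integral divisor, then there is a well-defined meromorphic function `G` on `Ω` with
`div(G) = mD` (at each `p ∈ s`, `G(z) = (z-p)^{m a_p}·(unit)`), holomorphic and
nonvanishing off `supp D`, normalized by `G(η₀) = 1`, and with
`|G|² = φ^m / φ(η₀)^m`. -/
theorem stmt16 (Ω : Set ℂ) (hΩ : IsOpen Ω) (hconn : IsPreconnected Ω)
    (hsc : SimplyConnectedSpace Ω)
    (s : Finset ℂ) (hs : (s : Set ℂ) ⊆ Ω) (a : ℂ → ℚ)
    (φ : ℂ → ℝ) (hφpos : ∀ z ∈ Ω \ (s : Set ℂ), 0 < φ z)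
    (H : ℂ → ℂ) (hH : DifferentiableOn ℂ H Ω)
    (hcurrent : ∀ z ∈ Ω \ (s : Set ℂ),
      Real.log (φ z)
        = (∑ p ∈ s, 2 * (a p : ℝ) * Real.log ‖z - p‖) + (H z).re)
    (m : ℕ) (hm : 0 < m)
    (hint : ∀ p ∈ s, ∃ k : ℤ, (m : ℚ) * a p = (k : ℚ))
    (η₀ : ℂ) (hη₀ : η₀ ∈ Ω \ (s : Set ℂ)) :
    ∃ G : ℂ → ℂ,
      DifferentiableOn ℂ G (Ω \ (s : Set ℂ)) ∧
      (∀ z ∈ Ω \ (s : Set ℂ), G z ≠ 0) ∧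
      G η₀ = 1 ∧
      (∀ z ∈ Ω \ (s : Set ℂ), ‖G z‖ ^ 2 = φ z ^ m * (φ η₀ ^ m)⁻¹) ∧
      (∀ p ∈ s, ∃ k : ℤ, (m : ℚ) * a p = (k : ℚ) ∧
        ∃ u : ℂ → ℂ, AnalyticAt ℂ u p ∧ u p ≠ 0 ∧
          ∀ᶠ z in nhdsWithin p {p}ᶜ, G z = (z - p) ^ k * u z) :=
  stmt16_general Ω hΩ s hs a φ hφpos H hH hcurrent m hint η₀ hη₀
end
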